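/- Let n ≥ 1, and let G : ℝⁿ \ {0} → (n×n real symmetric matrices) and V : ℝⁿ \ {0} → ℝ be smooth and positively homogeneous: G(λq) = λ^{n/2−2} G(q) and V(λq) = λ^{n/2−1} V(q) for all λ > 0 and q ≠ 0. Suppose q : I → ℝⁿ \ {0} and N : I → (0,∞) are smooth and satisfy the Euler–Lagrange equations d/dt[(1/N) Σ_α G_{κα}(q) q̇^α] = (1/(2N)) Σ_{μ,ν} (∂G_{μν}/∂q^κ)(q) q̇^μ q̇^ν − N (∂V/∂q^κ)(q) for all κ, together with the constraint Σ_{μ,ν} G_{μν}(q) q̇^μ q̇^ν + 2N² V(q) = 0. Then for every λ > 0 the scaled pair q̃(t) = λ·q(t), Ñ(t) = λ^{1/2}·N(t) also satisfies the same Euler–Lagrange equations and the constraint. (This is the scaling symmetry generated by Y = q^α ∂_{q^α} + (1/2) N ∂_N of the vacuum Einstein equations in minisuperspace.) -/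

import Mathlib

/-! Under `q ↦ λ q`, `N ↦ λ^{1/2} N` homogeneity multiplies every term of the constraint by
`λ^{n/2}` and the momentum `(1/N) G q̇` by `λ^{n/2 - 3/2}`. Partial derivatives of a function
homogeneous of degree `r` are homogeneous of degree `r - 1`, so both sides of the Euler–Lagrange
equations pick up the same factor `λ^{n/2 - 3/2}`. -/

open scoped BigOperators

/-- Partial derivative `∂f/∂q^α` of a scalar function on `ℝⁿ`. -/
noncomputable def pd {n : ℕ} (f : (Fin n → ℝ) → ℝ) (α : Fin n) (q : Fin n → ℝ) : ℝ :=
  fderiv ℝ f q (Pi.single α 1)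

open Filter Topology Finset

/-- No differentiability is needed: `f` is differentiable at `l • x` iff `f (l • ·)` is at `x`,
and otherwise both sides vanish. -/
theorem fderiv_smul_eq_of_eventuallyEq {𝕜 E F : Type*} [NontriviallyNormedField 𝕜]
    [NormedAddCommGroup E] [NormedSpace 𝕜 E] [NormedAddCommGroup F] [NormedSpace 𝕜 F]
    {f : E → F} {x : E} {l c : 𝕜} (hl : l ≠ 0)
    (h : (fun p => f (l • p)) =ᶠ[𝓝 x] fun p => c • f p) :
    fderiv 𝕜 f (l • x) = (l⁻¹ * c) • fderiv 𝕜 f x := by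
  have key : l • fderiv 𝕜 f (l • x) = c • fderiv 𝕜 f x := by
    rw [← fderiv_comp_smul, h.fderiv_eq]
    exact congrFun (fderiv_const_smul_field c) x
  rw [mul_smul, ← key, inv_smul_smul₀ hl]

theorem pd_smul_of_homogeneous {n : ℕ} {f : (Fin n → ℝ) → ℝ} {r l : ℝ} (hl : 0 < l)
    (hf : ∀ p : Fin n → ℝ, p ≠ 0 → f (l • p) = l ^ r * f p) {q : Fin n → ℝ} (hq : q ≠ 0)
    (κ : Fin n) : pd f κ (l • q) = l ^ (r - 1) * pd f κ q := by
  have hnear : (fun p => f (l • p)) =ᶠ[𝓝 q] fun p => l ^ r • f p := by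
    filter_upwards [isOpen_ne.mem_nhds hq] with p hp using hf p hp
  rw [pd, pd, fderiv_smul_eq_of_eventuallyEq hl.ne' hnear, Real.rpow_sub_one hl.ne',
    div_eq_inv_mul]
  rfl

theorem sum_sum_scale_quadratic {ι : Type*} [Fintype ι] (A : ι → ι → ℝ) (c l : ℝ) (v : ι → ℝ) :
    ∑ μ, ∑ ν, c * A μ ν * (l * v μ) * (l * v ν) = c * l ^ 2 * ∑ μ, ∑ ν, A μ ν * v μ * v ν := by
  simp only [mul_sum]
  exact sum_congr rfl fun μ _ => sum_congr rfl fun ν _ => by ring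

theorem scaling_symmetry_of_vacuum_equations (n : ℕ)
    (G : (Fin n → ℝ) → Fin n → Fin n → ℝ) (V : (Fin n → ℝ) → ℝ)
    (hGhom : ∀ l : ℝ, 0 < l → ∀ q : Fin n → ℝ, q ≠ 0 → ∀ μ ν,
      G (l • q) μ ν = l ^ ((n : ℝ) / 2 - 2) * G q μ ν)
    (hVhom : ∀ l : ℝ, 0 < l → ∀ q : Fin n → ℝ, q ≠ 0 →
      V (l • q) = l ^ ((n : ℝ) / 2 - 1) * V q)
    (I : Set ℝ) (hIopen : IsOpen I)
    (q : ℝ → Fin n → ℝ) (qd : ℝ → Fin n → ℝ) (N : ℝ → ℝ)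
    (hqne : ∀ t ∈ I, q t ≠ 0)
    -- the Euler–Lagrange equations on I
    (hEL : ∀ t ∈ I, ∀ κ : Fin n,
      HasDerivAt (fun s => (1 / N s) * ∑ α : Fin n, G (q s) κ α * qd s α)
        ((1 / (2 * N t)) * (∑ μ : Fin n, ∑ ν : Fin n,
            pd (fun p => G p μ ν) κ (q t) * qd t μ * qd t ν)
          - N t * pd V κ (q t)) t)
    -- the constraint on I
    (hcon : ∀ t ∈ I, (∑ μ : Fin n, ∑ ν : Fin n, G (q t) μ ν * qd t μ * qd t ν)
        + 2 * (N t) ^ 2 * V (q t) = 0) :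
    ∀ l : ℝ, 0 < l →
      -- the Euler–Lagrange equations for q̃ = λ·q, Ñ = λ^{1/2}·N
      (∀ t ∈ I, ∀ κ : Fin n,
        HasDerivAt (fun s => (1 / (l ^ ((1 : ℝ) / 2) * N s)) *
            ∑ α : Fin n, G (l • q s) κ α * (l * qd s α))
          ((1 / (2 * (l ^ ((1 : ℝ) / 2) * N t))) * (∑ μ : Fin n, ∑ ν : Fin n,
              pd (fun p => G p μ ν) κ (l • q t) * (l * qd t μ) * (l * qd t ν))
            - (l ^ ((1 : ℝ) / 2) * N t) * pd V κ (l • q t)) t)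
      -- and the constraint
      ∧ (∀ t ∈ I, (∑ μ : Fin n, ∑ ν : Fin n,
            G (l • q t) μ ν * (l * qd t μ) * (l * qd t ν))
          + 2 * (l ^ ((1 : ℝ) / 2) * N t) ^ 2 * V (l • q t) = 0) := by
  intro l hl
  have hsq : (l ^ (1 / 2 : ℝ)) ^ 2 = l := by rw [← Real.sqrt_eq_rpow, Real.sq_sqrt hl.le]
  set s := l ^ (1 / 2 : ℝ)
  obtain ⟨a, ha⟩ : ∃ a, l ^ ((n : ℝ) / 2 - 2) = a := ⟨_, rfl⟩
  have hs : l / s = s := by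
    rw [div_eq_iff (Real.rpow_pos_of_pos hl _).ne', ← sq, hsq]
  have hV : l ^ ((n : ℝ) / 2 - 1) = a * l := by
    rw [← ha, ← Real.rpow_add_one hl.ne']; ring_nf
  refine ⟨fun t ht κ => ?_, fun t ht => ?_⟩
  · have hmom : (fun u => (1 / (s * N u)) * ∑ α, G (l • q u) κ α * (l * qd u α)) =ᶠ[𝓝 t]
        fun u => (a * s) * ((1 / N u) * ∑ α, G (q u) κ α * qd u α) := by
      filter_upwards [hIopen.mem_nhds ht] with u hu
      simp only [hGhom l hl (q u) (hqne u hu), ha, mul_mul_mul_comm, ← mul_sum]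
      linear_combination (a / N u * ∑ α, G (q u) κ α * qd u α) * hs
    have hpdG : ∀ μ ν, pd (fun p => G p μ ν) κ (l • q t) =
        l ^ ((n : ℝ) / 2 - 2 - 1) * pd (fun p => G p μ ν) κ (q t) := fun μ ν =>
      pd_smul_of_homogeneous hl (fun p hp => hGhom l hl p hp μ ν) (hqne t ht) κ
    refine (((hEL t ht κ).const_mul (a * s)).congr_of_eventuallyEq hmom).congr_deriv ?_
    have hGd : l ^ ((n : ℝ) / 2 - 2 - 1) * l ^ 2 = a * l := by
      rw [← ha, Real.rpow_sub_one hl.ne']; field_simp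
    have hVd : l ^ ((n : ℝ) / 2 - 1 - 1) = a := by rw [← ha]; ring_nf
    simp only [hpdG, pd_smul_of_homogeneous hl (hVhom l hl) (hqne t ht), sum_sum_scale_quadratic,
      hGd, hVd]
    linear_combination
      (-a / (2 * N t) * ∑ μ, ∑ ν, pd (fun p => G p μ ν) κ (q t) * qd t μ * qd t ν) * hs
  · simp only [hGhom l hl (q t) (hqne t ht), hVhom l hl (q t) (hqne t ht),
      sum_sum_scale_quadratic, hV, ha]
    linear_combination (a * l ^ 2) * hcon t ht + (2 * a * l * N t ^ 2 * V (q t)) * hsq
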